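/- arXiv:2504.20640 — 5 statements merged into one kernel-verified Lean document; each statement's English description precedes it below -/
import Mathlib

section
/- The map Ψ(t,v) = (v/(1+tv), t/(1+tv)) maps the unit square [0,1] × [0,1] onto the closed triangle Δ in ℝ² with vertices (0,0), (0,1), and (1,0). -/
theorem psi_image_eq_triangle :
    (fun p : ℝ × ℝ => (p.2 / (1 + p.1 * p.2), p.1 / (1 + p.1 * p.2))) ''
        (Set.Icc (0 : ℝ) 1 ×ˢ Set.Icc (0 : ℝ) 1) =
      {p : ℝ × ℝ | 0 ≤ p.1 ∧ 0 ≤ p.2 ∧ p.1 + p.2 ≤ 1} := by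
  ext ⟨α, β⟩
  simp only [Set.mem_image, Set.mem_prod, Set.mem_Icc, Set.mem_setOf_eq, Prod.exists]
  constructor
  · rintro ⟨t, v, ⟨⟨ht0, ht1⟩, hv0, hv1⟩, h⟩
    simp only [Prod.mk.injEq] at h
    obtain ⟨h1, h2⟩ := h
    have hpos : (0:ℝ) < 1 + t * v := by nlinarith
    subst h1; subst h2
    refine ⟨div_nonneg hv0 hpos.le, div_nonneg ht0 hpos.le, ?_⟩
    rw [← add_div, div_le_one hpos]
    nlinarith
  · rintro ⟨hα, hβ, hsum⟩
    rcases eq_or_lt_of_le hα with h0 | h0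
    · refine ⟨β, 0, ⟨⟨hβ, by linarith⟩, le_refl 0, zero_le_one⟩, ?_⟩
      simp [← h0]
    · set d := Real.sqrt (1 - 4 * α * β) with hd
      have h4 : (0:ℝ) ≤ 1 - 4 * α * β := by nlinarith [sq_nonneg (α - β), sq_nonneg (α + β)]
      have hd0 : 0 ≤ d := Real.sqrt_nonneg _
      have hd2 : d ^ 2 = 1 - 4 * α * β := Real.sq_sqrt h4
      have hd1 : d ≤ 1 := by
        rw [hd]
        rw [Real.sqrt_le_one]
        nlinarith
      have habs : |1 - 2 * α| ≤ d := by
        have h := Real.sqrt_le_sqrt (show (1 - 2*α)^2 ≤ 1 - 4*α*β by nlinarith)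
        rwa [Real.sqrt_sq_eq_abs] at h
      have hb1 : 1 - 2 * α ≤ d := le_trans (le_abs_self _) habs
      have hb2 : 2 * α - 1 ≤ d := by
        have := neg_abs_le (1 - 2 * α); linarith
      have h1d : (0:ℝ) < 1 + d := by linarith
      refine ⟨(1 - d) / (2 * α), 2 * α / (1 + d), ⟨⟨?_, ?_⟩, ?_, ?_⟩, ?_⟩
      · exact div_nonneg (by linarith) (by linarith)
      · rw [div_le_one (by linarith)]; linarith
      · exact div_nonneg (by linarith) h1d.le
      · rw [div_le_one h1d]; linarith
      · have hα' : α ≠ 0 := ne_of_gt h0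
        have h1d' : (1:ℝ) + d ≠ 0 := ne_of_gt h1d
        have htv : 1 + (1 - d) / (2 * α) * (2 * α / (1 + d)) = 2 / (1 + d) := by
          field_simp
          ring
        simp only [htv, Prod.mk.injEq]
        constructor
        · rw [div_div_div_cancel_right₀]
          · exact div_eq_iff (by norm_num) |>.mpr (by ring)
          · exact h1d'
        · rw [div_div_eq_mul_div, div_mul_eq_mul_div, div_div]
          rw [div_eq_iff (by positivity)]
          nlinarith [hd2]
end

section
/- For irrational x ∈ (0,1) and n ≥ 1, the Jurkat–Peyerimhoff formula holds: Θ_{n+1} = Θ_{n-1} + a_{n+1}·√(1 − 4·Θ_{n-1}·Θ_n) − a_{n+1}²·Θ_n, where a_{n+1} is the (n+1)-st partial quotient of x. -/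
set_option linter.unusedSectionVars false

/-- The Gauss map `T(x) = 1/x - ⌊1/x⌋`, with `T(0) = 0`. -/
noncomputable def gaussMap (x : ℝ) : ℝ := if x = 0 then 0 else 1 / x - ⌊1 / x⌋

/-- The `n`-th partial quotient `a_n` of the RCF expansion of `x` (for `n ≥ 1`). -/
noncomputable def rcfA (x : ℝ) (n : ℕ) : ℤ := ⌊1 / gaussMap^[n - 1] x⌋

/-- Numerators `p_n` of the RCF convergents of `x ∈ (0,1)`. -/
noncomputable def rcfP (x : ℝ) : ℕ → ℤ
  | 0 => 0
  | 1 => 1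
  | n + 2 => rcfA x (n + 2) * rcfP x (n + 1) + rcfP x n

/-- Denominators `q_n` of the RCF convergents of `x ∈ (0,1)`. -/
noncomputable def rcfQ (x : ℝ) : ℕ → ℤ
  | 0 => 1
  | 1 => rcfA x 1
  | n + 2 => rcfA x (n + 2) * rcfQ x (n + 1) + rcfQ x n

/-- Approximation coefficient `Θ_n(x) = q_n² |x - p_n/q_n|`. -/
noncomputable def Theta (x : ℝ) (n : ℕ) : ℝ :=
  (rcfQ x n : ℝ) ^ 2 * |x - (rcfP x n : ℝ) / (rcfQ x n : ℝ)|

namespace JPaux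

/-- iterated Gauss map -/
noncomputable def t (x : ℝ) (k : ℕ) : ℝ := gaussMap^[k] x

/-- signed error `q_n x - p_n` -/
noncomputable def D (x : ℝ) (n : ℕ) : ℝ := (rcfQ x n : ℝ) * x - (rcfP x n : ℝ)

lemma gauss_mem {y : ℝ} (hy : Irrational y) (h0 : 0 < y) (h1 : y < 1) :
    Irrational (gaussMap y) ∧ 0 < gaussMap y ∧ gaussMap y < 1 := by
  have hne : y ≠ 0 := ne_of_gt h0
  have hval : gaussMap y = Int.fract (1 / y) := by
    rw [gaussMap, if_neg hne, Int.self_sub_floor]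
  have hinv : Irrational (1 / y) := by
    simpa [one_div] using hy.inv
  have hfr : Irrational (Int.fract (1 / y)) := by
    rw [← Int.self_sub_floor]
    exact hinv.sub_intCast ⌊1 / y⌋
  refine ⟨hval ▸ hfr, ?_, ?_⟩
  · rw [hval]
    exact lt_of_le_of_ne (Int.fract_nonneg _) (Ne.symm hfr.ne_zero)
  · rw [hval]; exact Int.fract_lt_one _

lemma t_mem (x : ℝ) (hx : x ∈ Set.Ioo (0 : ℝ) 1) (hirr : Irrational x) (k : ℕ) :
    Irrational (t x k) ∧ 0 < t x k ∧ t x k < 1 := by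
  induction k with
  | zero => exact ⟨hirr, hx.1, hx.2⟩
  | succ k ih =>
    have h : t x (k + 1) = gaussMap (t x k) := Function.iterate_succ_apply' _ _ _
    rw [h]
    exact gauss_mem ih.1 ih.2.1 ih.2.2

variable {x : ℝ} (hx : x ∈ Set.Ioo (0 : ℝ) 1) (hirr : Irrational x)

lemma rcfA_eq (k : ℕ) : rcfA x (k + 1) = ⌊1 / t x k⌋ := by
  simp [rcfA, t]

include hx hirr

lemma one_le_rcfA (k : ℕ) : 1 ≤ rcfA x (k + 1) := by
  rw [rcfA_eq]
  obtain ⟨_, h0, h1⟩ := t_mem x hx hirr k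
  exact Int.le_floor.mpr (by exact_mod_cast (one_lt_one_div h0 h1).le)

lemma t_succ (k : ℕ) : t x (k + 1) = 1 / t x k - (rcfA x (k + 1) : ℝ) := by
  obtain ⟨_, h0, _⟩ := t_mem x hx hirr k
  have h : t x (k + 1) = gaussMap (t x k) := Function.iterate_succ_apply' _ _ _
  rw [h, gaussMap, if_neg (ne_of_gt h0), rcfA_eq]

/-- product formula for the signed error -/
lemma D_eq (n : ℕ) : D x n = (-1) ^ n * ∏ k ∈ Finset.range (n + 1), t x k := by
  induction n using Nat.twoStepInduction with
  | zero =>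
    simp [D, rcfP, rcfQ, t]
  | one =>
    have h := t_succ hx hirr 0
    have hx0 : x ≠ 0 := ne_of_gt hx.1
    have ht0 : t x 0 = x := rfl
    have ha : (rcfA x 1 : ℝ) = 1 / x - t x 1 := by rw [h, ht0]; ring
    simp only [D, rcfP, rcfQ, ha, Finset.prod_range_succ, Finset.prod_range_one, ht0]
    field_simp
    try ring
  | more n ih1 ih2 =>
    have hrec : D x (n + 2) = (rcfA x (n + 2) : ℝ) * D x (n + 1) + D x n := by
      simp only [D, rcfP, rcfQ]
      push_cast
      ring
    obtain ⟨_, h0, _⟩ := t_mem x hx hirr (n + 1)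
    have ht : t x (n + 1) * t x (n + 2) = 1 - (rcfA x (n + 2) : ℝ) * t x (n + 1) := by
      have h : t x (n + 2) = 1 / t x (n + 1) - (rcfA x (n + 2) : ℝ) := t_succ hx hirr (n + 1)
      rw [h]
      field_simp
    rw [hrec, ih2, ih1, Finset.prod_range_succ (n := n + 2), Finset.prod_range_succ (n := n + 1)]
    linear_combination (-1 : ℝ) * ((-1) ^ n * ∏ k ∈ Finset.range (n + 1), t x k) * ht

lemma t_pos (k : ℕ) : 0 < t x k := (t_mem x hx hirr k).2.1

lemma prod_pos (n : ℕ) : 0 < ∏ k ∈ Finset.range n, t x k :=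
  Finset.prod_pos fun k _ => t_pos hx hirr k

lemma one_le_q : ∀ n, 1 ≤ rcfQ x n ∧ rcfQ x n ≤ rcfQ x (n + 1) := by
  intro n
  induction n with
  | zero =>
    refine ⟨le_refl _, ?_⟩
    simpa [rcfQ] using one_le_rcfA hx hirr 0
  | succ n ih =>
    have ha : 1 ≤ rcfA x (n + 2) := one_le_rcfA hx hirr (n + 1)
    constructor
    · exact le_trans ih.1 ih.2
    · show rcfQ x (n + 1) ≤ rcfA x (n + 2) * rcfQ x (n + 1) + rcfQ x n
      nlinarith [ih.1, ih.2]

omit hx hirr in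
lemma det (n : ℕ) : rcfP x (n + 1) * rcfQ x n - rcfP x n * rcfQ x (n + 1) = (-1) ^ n := by
  induction n with
  | zero => simp [rcfP, rcfQ]
  | succ n ih =>
    show rcfP x (n + 2) * rcfQ x (n + 1) - rcfP x (n + 1) * rcfQ x (n + 2) = (-1) ^ (n + 1)
    simp only [rcfP, rcfQ]
    ring_nf
    ring_nf at ih
    linarith [ih]

lemma theta_eq (n : ℕ) : Theta x n = (rcfQ x n : ℝ) * |D x n| := by
  have hq : (0 : ℝ) < (rcfQ x n : ℝ) := by
    exact_mod_cast lt_of_lt_of_le zero_lt_one (one_le_q hx hirr n).1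
  have h : x - (rcfP x n : ℝ) / (rcfQ x n : ℝ) = D x n / (rcfQ x n : ℝ) := by
    field_simp [D]
    unfold D
    ring
  rw [Theta, h, abs_div, abs_of_pos hq]
  field_simp

end JPaux

open JPaux

theorem jurkat_peyerimhoff (x : ℝ) (hx : x ∈ Set.Ioo (0 : ℝ) 1) (hirr : Irrational x)
    (n : ℕ) (hn : 1 ≤ n) :
    Theta x (n + 1) =
      Theta x (n - 1) + (rcfA x (n + 1) : ℝ) * Real.sqrt (1 - 4 * Theta x (n - 1) * Theta x n)
        - (rcfA x (n + 1) : ℝ) ^ 2 * Theta x n := by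
  obtain ⟨m, rfl⟩ : ∃ m, n = m + 1 := ⟨n - 1, (Nat.succ_pred_eq_of_pos hn).symm⟩
  simp only [Nat.add_sub_cancel]
  -- cast facts first (before `set`)
  have hqc : (rcfQ x (m + 2) : ℝ)
      = (rcfA x (m + 2) : ℝ) * (rcfQ x (m + 1) : ℝ) + (rcfQ x m : ℝ) := by
    simp only [rcfQ]; push_cast; ring
  have hqa1 : (1 : ℝ) ≤ (rcfQ x m : ℝ) := by exact_mod_cast (one_le_q hx hirr m).1
  have hqab : (rcfQ x m : ℝ) ≤ (rcfQ x (m + 1) : ℝ) := by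
    exact_mod_cast (one_le_q hx hirr m).2
  have ha1 : (1 : ℝ) ≤ (rcfA x (m + 2) : ℝ) := by
    exact_mod_cast one_le_rcfA hx hirr (m + 1)
  obtain ⟨_, hu0, hu1⟩ := t_mem x hx hirr (m + 1)
  obtain ⟨_, hv0, hv1⟩ := t_mem x hx hirr (m + 2)
  have huv : t x (m + 1) * t x (m + 2)
      = 1 - (rcfA x (m + 2) : ℝ) * t x (m + 1) := by
    have h : t x (m + 2) = 1 / t x (m + 1) - (rcfA x (m + 2) : ℝ) :=
      t_succ hx hirr (m + 1)
    rw [h]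
    field_simp
  have hdet' : (rcfP x (m + 1) : ℝ) * (rcfQ x m : ℝ)
      - (rcfP x m : ℝ) * (rcfQ x (m + 1) : ℝ) = (-1) ^ m := by
    exact_mod_cast det (x := x) m
  -- abbreviations
  set a : ℝ := (rcfA x (m + 2) : ℝ) with ha
  set qa : ℝ := (rcfQ x m : ℝ) with hqa
  set qb : ℝ := (rcfQ x (m + 1) : ℝ) with hqb
  set Pa : ℝ := ∏ k ∈ Finset.range (m + 1), t x k with hPa
  set u : ℝ := t x (m + 1) with hu
  set v : ℝ := t x (m + 2) with hv
  have hPapos : 0 < Pa := prod_pos hx hirr (m + 1)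
  have hqb1 : (1 : ℝ) ≤ qb := le_trans hqa1 hqab
  -- D values
  have hDa : D x m = (-1) ^ m * Pa := D_eq hx hirr m
  have hDb : D x (m + 1) = (-1) ^ (m + 1) * (Pa * u) := by
    rw [D_eq hx hirr (m + 1), Finset.prod_range_succ]
  have hDc : D x (m + 2) = (-1) ^ (m + 2) * (Pa * u * v) := by
    rw [D_eq hx hirr (m + 2), Finset.prod_range_succ, Finset.prod_range_succ]
  have habs : |(-1 : ℝ) ^ m| = 1 := by
    rw [abs_pow, abs_neg, abs_one, one_pow]
  -- Theta values
  have hTa : Theta x m = qa * Pa := by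
    rw [theta_eq hx hirr, hDa, abs_mul, habs, one_mul, abs_of_pos hPapos]
  have hTb : Theta x (m + 1) = qb * (Pa * u) := by
    rw [theta_eq hx hirr, hDb, abs_mul]
    rw [show |(-1 : ℝ) ^ (m + 1)| = 1 by rw [abs_pow, abs_neg, abs_one, one_pow]]
    rw [one_mul, abs_of_pos (by positivity)]
  have hTc : Theta x (m + 2) = (a * qb + qa) * (Pa * u * v) := by
    rw [theta_eq hx hirr, hDc, abs_mul, hqc]
    rw [show |(-1 : ℝ) ^ (m + 2)| = 1 by rw [abs_pow, abs_neg, abs_one, one_pow]]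
    rw [one_mul, abs_of_pos (by positivity)]
  -- determinant identity
  have hdet : qa * D x (m + 1) - qb * D x m = (-1) ^ (m + 1) := by
    simp only [D, pow_succ]
    linear_combination (-1 : ℝ) * hdet'
  -- the quantity under the square root is a perfect square
  have hsign : ((-1 : ℝ) ^ m) * ((-1) ^ (m + 1)) = -1 := by
    rw [pow_succ, ← mul_assoc, ← pow_add, ← two_mul, pow_mul]
    norm_num
  have h1 : (qa * D x (m + 1) - qb * D x m) ^ 2 = 1 := by
    rw [hdet, ← pow_mul, mul_comm, pow_mul]
    norm_num
  have h2 : Theta x m * Theta x (m + 1) = -(qa * D x (m + 1)) * (qb * D x m) := by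
    rw [hTa, hTb, hDa, hDb]
    linear_combination qa * qb * Pa * Pa * u * hsign
  have hsq : 1 - 4 * Theta x m * Theta x (m + 1) = (qa * D x (m + 1) + qb * D x m) ^ 2 := by
    linear_combination (-1 : ℝ) * h1 - 4 * h2
  have hsqrt : Real.sqrt (1 - 4 * Theta x m * Theta x (m + 1)) = qb * Pa - qa * (Pa * u) := by
    rw [hsq, Real.sqrt_sq_eq_abs]
    have h : qa * D x (m + 1) + qb * D x m = (-1) ^ m * (qb * Pa - qa * (Pa * u)) := by
      rw [hDa, hDb]; ring
    rw [h, abs_mul, habs, one_mul, abs_of_nonneg]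
    nlinarith [mul_nonneg (sub_nonneg.mpr hqab) hPapos.le,
      mul_nonneg (mul_nonneg (le_trans zero_le_one hqa1) hPapos.le) (sub_nonneg.mpr hu1.le)]
  rw [hsqrt, hTc, hTa, hTb]
  linear_combination ((a * qb + qa) * Pa) * huv
end

section
/- For irrational x ∈ (0,1) and n ≥ 1, min{Θ_{n-1}(x), Θ_n(x), Θ_{n+1}(x)} ≤ 1/√(a_{n+1}² + 4) ≤ 1/√5, where a_{n+1} is the (n+1)-st partial quotient of x (generalized Borel theorem). -/
lemma gauss_step {y : ℝ} (hy : y ∈ Set.Ioo (0:ℝ) 1) (hirr : Irrational y) :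
    gaussMap y ∈ Set.Ioo (0:ℝ) 1 ∧ Irrational (gaussMap y) := by
  have hy0 : y ≠ 0 := ne_of_gt hy.1
  have hg : gaussMap y = Int.fract (1/y) := by
    rw [gaussMap, if_neg hy0, Int.fract]
  have hgi : Irrational (gaussMap y) := by
    rw [hg, Int.fract]
    exact (by simpa using hirr.inv : Irrational (1/y)).sub_intCast _
  refine ⟨⟨?_, ?_⟩, hgi⟩
  · rw [hg]
    rcases (Int.fract_nonneg (1/y)).lt_or_eq with h | h
    · exact h
    · exfalso
      rw [hg, ← h] at hgi
      exact hgi.ne_zero rfl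
  · rw [hg]; exact Int.fract_lt_one _

lemma iter_mem {x : ℝ} (hx : x ∈ Set.Ioo (0:ℝ) 1) (hirr : Irrational x) (k : ℕ) :
    gaussMap^[k] x ∈ Set.Ioo (0:ℝ) 1 ∧ Irrational (gaussMap^[k] x) := by
  induction k with
  | zero => exact ⟨hx, hirr⟩
  | succ k ih =>
      rw [Function.iterate_succ_apply']
      exact gauss_step ih.1 ih.2

lemma t_rec {x : ℝ} (hx : x ∈ Set.Ioo (0:ℝ) 1) (hirr : Irrational x) (k : ℕ) :
    gaussMap^[k] x * ((rcfA x (k+1) : ℝ) + gaussMap^[k+1] x) = 1 := by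
  obtain ⟨⟨h0, _⟩, hi⟩ := iter_mem hx hirr k
  have hne : gaussMap^[k] x ≠ 0 := ne_of_gt h0
  have hs : gaussMap^[k+1] x = 1 / gaussMap^[k] x - ⌊1 / gaussMap^[k] x⌋ := by
    rw [Function.iterate_succ_apply', gaussMap, if_neg hne]
  have ha : rcfA x (k+1) = ⌊1 / gaussMap^[k] x⌋ := by
    simp [rcfA]
  rw [hs, ha]
  field_simp
  ring

lemma a_pos {x : ℝ} (hx : x ∈ Set.Ioo (0:ℝ) 1) (hirr : Irrational x) (k : ℕ) :
    1 ≤ rcfA x (k+1) := by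
  obtain ⟨⟨h0, h1⟩, _⟩ := iter_mem hx hirr k
  have ha : rcfA x (k+1) = ⌊1 / gaussMap^[k] x⌋ := by simp [rcfA]
  rw [ha]
  have : (1:ℝ) ≤ 1 / gaussMap^[k] x := by
    rw [le_div_iff₀ h0, one_mul]; exact h1.le
  exact_mod_cast Int.le_floor.2 (by exact_mod_cast this)

lemma q_pos {x : ℝ} (hx : x ∈ Set.Ioo (0:ℝ) 1) (hirr : Irrational x) (k : ℕ) :
    0 < rcfQ x k := by
  have H : ∀ m, 0 < rcfQ x m ∧ 0 < rcfQ x (m+1) := by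
    intro m
    induction m with
    | zero =>
        refine ⟨by norm_num [rcfQ], ?_⟩
        show 0 < rcfQ x 1
        have := a_pos hx hirr 0
        norm_num at this
        simp only [rcfQ]; omega
    | succ m ih =>
        refine ⟨ih.2, ?_⟩
        show 0 < rcfA x (m+2) * rcfQ x (m+1) + rcfQ x m
        have := a_pos hx hirr (m+1)
        nlinarith [ih.1, ih.2]
  exact (H k).1

lemma conv_identity {x : ℝ} (hx : x ∈ Set.Ioo (0:ℝ) 1) (hirr : Irrational x) (m : ℕ) :
    x * ((rcfQ x (m+1) : ℝ) + (rcfQ x m : ℝ) * gaussMap^[m+1] x)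
      = (rcfP x (m+1) : ℝ) + (rcfP x m : ℝ) * gaussMap^[m+1] x := by
  induction m with
  | zero =>
      have h := t_rec hx hirr 0
      simp only [Function.iterate_zero_apply] at h
      show x * ((rcfQ x 1 : ℝ) + (rcfQ x 0 : ℝ) * gaussMap^[1] x)
        = (rcfP x 1 : ℝ) + (rcfP x 0 : ℝ) * gaussMap^[1] x
      simp only [rcfQ, rcfP]
      push_cast
      linarith [h]
  | succ m ih =>
      have h := t_rec hx hirr (m+1)
      show x * ((rcfQ x (m+2) : ℝ) + (rcfQ x (m+1) : ℝ) * gaussMap^[m+2] x)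
        = (rcfP x (m+2) : ℝ) + (rcfP x (m+1) : ℝ) * gaussMap^[m+2] x
      have hq : (rcfQ x (m+2) : ℝ) = rcfA x (m+2) * rcfQ x (m+1) + rcfQ x m := by
        simp only [rcfQ]; push_cast; ring
      have hp : (rcfP x (m+2) : ℝ) = rcfA x (m+2) * rcfP x (m+1) + rcfP x m := by
        simp only [rcfP]; push_cast; ring
      rw [hq, hp]
      linear_combination ((rcfA x (m+2) : ℝ) + gaussMap^[m+2] x) * ih
        + ((rcfP x m : ℝ) - x * rcfQ x m) * h

lemma det_identity (x : ℝ) (m : ℕ) :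
    rcfP x m * rcfQ x (m+1) - rcfP x (m+1) * rcfQ x m = (-1)^(m+1) := by
  induction m with
  | zero => simp [rcfP, rcfQ]
  | succ m ih =>
      show rcfP x (m+1) * rcfQ x (m+2) - rcfP x (m+2) * rcfQ x (m+1) = (-1)^(m+2)
      have hq : rcfQ x (m+2) = rcfA x (m+2) * rcfQ x (m+1) + rcfQ x m := rfl
      have hp : rcfP x (m+2) = rcfA x (m+2) * rcfP x (m+1) + rcfP x m := rfl
      rw [hq, hp]
      have : (-1:ℤ)^(m+2) = -(-1)^(m+1) := by ring
      rw [this, ← ih]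
      ring

lemma theta_eq {x : ℝ} (hx : x ∈ Set.Ioo (0:ℝ) 1) (hirr : Irrational x) (m : ℕ) :
    Theta x m = (rcfQ x m : ℝ) / ((rcfQ x (m+1) : ℝ) + (rcfQ x m : ℝ) * gaussMap^[m+1] x) := by
  obtain ⟨⟨hu0, hu1⟩, -⟩ := iter_mem hx hirr (m+1)
  have hQ0 : (0:ℝ) < (rcfQ x m : ℝ) := by exact_mod_cast q_pos hx hirr m
  have hQ1 : (0:ℝ) < (rcfQ x (m+1) : ℝ) := by exact_mod_cast q_pos hx hirr (m+1)
  set u := gaussMap^[m+1] x with hu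
  set Q0 := (rcfQ x m : ℝ) with hQ0d
  set Q1 := (rcfQ x (m+1) : ℝ) with hQ1d
  have hD : 0 < Q1 + Q0 * u := by nlinarith
  have hid := conv_identity hx hirr m
  have hdet : (rcfP x m : ℝ) * Q1 - (rcfP x (m+1) : ℝ) * Q0 = (-1)^(m+1) := by
    have := det_identity x m
    rw [hQ1d, hQ0d]
    exact_mod_cast this
  have key : (x * Q0 - (rcfP x m : ℝ)) * (Q1 + Q0 * u) = (-1)^m := by
    linear_combination Q0 * hid - hdet
  have hval : x * Q0 - (rcfP x m : ℝ) = (-1)^m / (Q1 + Q0 * u) := by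
    rw [eq_div_iff hD.ne']; exact key
  have hsub : x - (rcfP x m : ℝ) / Q0 = (-1)^m / (Q0 * (Q1 + Q0 * u)) := by
    have h1 : x - (rcfP x m : ℝ) / Q0 = (x * Q0 - (rcfP x m : ℝ)) / Q0 := by
      field_simp
    rw [h1, hval, div_div, mul_comm Q0 (Q1 + Q0 * u), ← div_div, div_div]
  rw [Theta]
  rw [hsub, abs_div, abs_pow, abs_neg, abs_one, one_pow, abs_of_pos (by positivity)]
  field_simp
  ring

lemma theta_succ {x : ℝ} (hx : x ∈ Set.Ioo (0:ℝ) 1) (hirr : Irrational x) (m : ℕ) :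
    Theta x (m+1) = (rcfQ x (m+1) : ℝ) * gaussMap^[m+1] x
      / ((rcfQ x (m+1) : ℝ) + (rcfQ x m : ℝ) * gaussMap^[m+1] x) := by
  obtain ⟨⟨hu0, hu1⟩, -⟩ := iter_mem hx hirr (m+1)
  obtain ⟨⟨hw0, hw1⟩, -⟩ := iter_mem hx hirr (m+2)
  have hQ0 : (0:ℝ) < (rcfQ x m : ℝ) := by exact_mod_cast q_pos hx hirr m
  have hQ1 : (0:ℝ) < (rcfQ x (m+1) : ℝ) := by exact_mod_cast q_pos hx hirr (m+1)
  have hQ2 : (0:ℝ) < (rcfQ x (m+2) : ℝ) := by exact_mod_cast q_pos hx hirr (m+2)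
  have ht := t_rec hx hirr (m+1)
  have hq2 : (rcfQ x (m+2) : ℝ) = (rcfA x (m+2) : ℝ) * (rcfQ x (m+1) : ℝ) + (rcfQ x m : ℝ) := by
    have : rcfQ x (m+2) = rcfA x (m+2) * rcfQ x (m+1) + rcfQ x m := rfl
    exact_mod_cast this
  have hD2 : 0 < (rcfQ x (m+2) : ℝ) + (rcfQ x (m+1) : ℝ) * gaussMap^[m+2] x := by nlinarith
  have hD1 : 0 < (rcfQ x (m+1) : ℝ) + (rcfQ x m : ℝ) * gaussMap^[m+1] x := by nlinarith
  rw [theta_eq hx hirr (m+1), div_eq_div_iff hD2.ne' hD1.ne']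
  rw [hq2]
  linear_combination (-((rcfQ x (m+1) : ℝ))^2) * ht

lemma borel_core {a lam u w : ℝ} (ha : 1 ≤ a) (hlam2 : lam^2 = a^2+4) (hlam : 0 < lam)
    (hu : 0 < u) (hw : 0 < w)
    (h1 : a+u+w < lam*(a+u)*w) (h2 : a+u+w < lam) (h3 : a+u+w < lam*(a+w)*u) : False := by
  have key1 : 4*(a+u+w) < lam*(u+w)*(2*a+(u+w)) := by
    nlinarith [mul_nonneg hlam.le (sq_nonneg (u-w))]
  have hpos : 0 < lam*(u+w) + a*(a+lam) := by
    have := add_pos hu hw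
    nlinarith
  have key2 : 0 < (lam - (a+u+w)) * (lam*(u+w) + a*(a+lam)) :=
    mul_pos (by linarith) hpos
  have hl : lam^3 = (a^2+4)*lam := by
    rw [pow_succ, hlam2]
  nlinarith [key1, key2, hl]

theorem borel_generalized (x : ℝ) (hx : x ∈ Set.Ioo (0 : ℝ) 1) (hirr : Irrational x)
    (n : ℕ) (hn : 1 ≤ n) :
    min (min (Theta x (n - 1)) (Theta x n)) (Theta x (n + 1)) ≤
        1 / Real.sqrt ((rcfA x (n + 1) : ℝ) ^ 2 + 4) ∧
      1 / Real.sqrt ((rcfA x (n + 1) : ℝ) ^ 2 + 4) ≤ 1 / Real.sqrt 5 := by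
  obtain ⟨m, rfl⟩ : ∃ m, n = m + 1 := ⟨n - 1, (Nat.succ_pred_eq_of_pos hn).symm⟩
  simp only [show m + 1 + 1 = m + 2 from rfl] at *
  have ha' : (1:ℝ) ≤ (rcfA x (m+2) : ℝ) := by exact_mod_cast a_pos hx hirr (m+1)
  have hq2' : (rcfQ x (m+2) : ℝ)
      = (rcfA x (m+2) : ℝ) * (rcfQ x (m+1) : ℝ) + (rcfQ x m : ℝ) := by
    have h : rcfQ x (m+2) = rcfA x (m+2) * rcfQ x (m+1) + rcfQ x m := rfl
    exact_mod_cast congrArg (fun z : ℤ => (z : ℝ)) h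
  set a : ℝ := (rcfA x (m + 2) : ℝ) with hadef
  have ha : (1:ℝ) ≤ a := ha'
  have hsum : (0:ℝ) < a^2 + 4 := by nlinarith
  set lam : ℝ := Real.sqrt (a^2 + 4) with hlamdef
  have hlam : 0 < lam := Real.sqrt_pos.2 hsum
  have hlam2 : lam^2 = a^2 + 4 := Real.sq_sqrt hsum.le
  constructor
  · -- main inequality
    by_contra hcon
    push_neg at hcon
    rw [lt_min_iff, lt_min_iff] at hcon
    obtain ⟨⟨hTa, hTb⟩, hTc⟩ := hcon
    -- setup
    obtain ⟨⟨hs0, hs1⟩, -⟩ := iter_mem hx hirr (m+1)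
    obtain ⟨⟨hu0, hu1⟩, -⟩ := iter_mem hx hirr (m+2)
    set s := gaussMap^[m+1] x with hsdef
    set u := gaussMap^[m+2] x with hudef
    have hQ0 : (0:ℝ) < (rcfQ x m : ℝ) := by exact_mod_cast q_pos hx hirr m
    have hQ1 : (0:ℝ) < (rcfQ x (m+1) : ℝ) := by exact_mod_cast q_pos hx hirr (m+1)
    have hQ2 : (0:ℝ) < (rcfQ x (m+2) : ℝ) := by exact_mod_cast q_pos hx hirr (m+2)
    set Q0 := (rcfQ x m : ℝ)
    set Q1 := (rcfQ x (m+1) : ℝ)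
    set Q2 := (rcfQ x (m+2) : ℝ)
    have ht : s * (a + u) = 1 := t_rec hx hirr (m+1)
    have hq2 : Q2 = a * Q1 + Q0 := hq2'
    have hD1 : 0 < Q1 + Q0 * s := by nlinarith
    have hD2 : 0 < Q2 + Q1 * u := by nlinarith
    -- rewrite the three Thetas
    have hTm : Theta x (m+1-1) = Q0 / (Q1 + Q0 * s) := by
      rw [Nat.add_sub_cancel]; exact theta_eq hx hirr m
    have hTn : Theta x (m+1) = Q1 * s / (Q1 + Q0 * s) := theta_succ hx hirr m
    have hTp : Theta x (m+1+1) = Q2 * u / (Q2 + Q1 * u) := theta_succ hx hirr (m+1)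
    rw [hTm] at hTa
    rw [hTn] at hTb
    rw [hTp] at hTc
    -- clear denominators
    have hA : Q1 + Q0 * s < lam * Q0 := by
      have := (div_lt_div_iff₀ hlam hD1).mp hTa
      linarith
    have hB : Q1 + Q0 * s < lam * (Q1 * s) := by
      have := (div_lt_div_iff₀ hlam hD1).mp hTb
      linarith
    have hC : Q2 + Q1 * u < lam * (Q2 * u) := by
      have := (div_lt_div_iff₀ hlam hD2).mp hTc
      linarith
    -- normalize: w = Q0/Q1
    set w := Q0 / Q1 with hwdef
    have hw : w * Q1 = Q0 := by rw [hwdef, div_mul_cancel₀ _ hQ1.ne']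
    have hwpos : 0 < w := div_pos hQ0 hQ1
    have hQs : 0 < Q1 * s := mul_pos hQ1 hs0
    have h2c : a + u + w < lam := by
      have hmul : (a + u + w) * (Q1 * s) < lam * (Q1 * s) := by
        have expand : (a + u + w) * (Q1 * s) = Q1 * (s * (a + u)) + (w * Q1) * s := by ring
        rw [expand, ht, hw, mul_one]
        linarith [hB]
      exact lt_of_mul_lt_mul_right (by linarith [hmul]) hQs.le
    have h1c : a + u + w < lam * (a + u) * w := by
      have hmul : (a + u + w) * (Q1 * s) < (lam * (a + u) * w) * (Q1 * s) := by
        have expand1 : (a + u + w) * (Q1 * s) = Q1 * (s * (a + u)) + (w * Q1) * s := by ring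
        have expand2 : (lam * (a + u) * w) * (Q1 * s) = lam * ((w * Q1) * (s * (a + u))) := by ring
        rw [expand1, expand2, ht, hw, mul_one, mul_one]
        linarith [hA]
      exact lt_of_mul_lt_mul_right (by linarith [hmul]) hQs.le
    have h3c : a + u + w < lam * (a + w) * u := by
      have hmul : (a + u + w) * Q1 < (lam * (a + w) * u) * Q1 := by
        have expand1 : (a + u + w) * Q1 = (a * Q1 + w * Q1) + Q1 * u := by ring
        have expand2 : (lam * (a + w) * u) * Q1 = lam * ((a * Q1 + w * Q1) * u) := by ring
        rw [expand1, expand2, hw]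
        rw [← hq2]
        linarith [hC]
      exact lt_of_mul_lt_mul_right (by linarith [hmul]) hQ1.le
    exact borel_core ha hlam2 hlam hu0 hwpos h1c h2c h3c
  · -- second inequality
    have h5 : (0:ℝ) < Real.sqrt 5 := Real.sqrt_pos.2 (by norm_num)
    apply one_div_le_one_div_of_le h5
    apply Real.sqrt_le_sqrt
    nlinarith
end

section
/- Let x be irrational in (0,1) with partial quotients a_n = a_{n+1} = m where m ≥ 2. Then min{Θ_{n-1}(x), Θ_n(x)} ≤ m/(m²+1) ≤ 2/5. -/
lemma tail_mem (x : ℝ) (hx : x ∈ Set.Ioo (0:ℝ) 1) (hirr : Irrational x) (k : ℕ) :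
    gaussMap^[k] x ∈ Set.Ioo (0:ℝ) 1 ∧ Irrational (gaussMap^[k] x) := by
  induction k with
  | zero => exact ⟨hx, hirr⟩
  | succ k ih =>
    obtain ⟨⟨h0, h1⟩, hi⟩ := ih
    rw [Function.iterate_succ_apply']
    set y := gaussMap^[k] x with hy
    have hy0 : y ≠ 0 := ne_of_gt h0
    have hinv : Irrational (1 / y) := by rw [one_div]; exact hi.inv
    have hg : gaussMap y = Int.fract (1 / y) := by
      rw [gaussMap, if_neg hy0, Int.fract]
    have hgi : Irrational (gaussMap y) := by
      rw [hg, Int.fract]; exact hinv.sub_intCast _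
    refine ⟨⟨?_, ?_⟩, hgi⟩
    · rcases lt_or_eq_of_le (Int.fract_nonneg (1/y)) with h | h
      · rw [hg]; exact h
      · exact absurd (hg.trans h.symm) hgi.ne_zero
    · rw [hg]; exact Int.fract_lt_one _

lemma a_one_le (x : ℝ) (hx : x ∈ Set.Ioo (0:ℝ) 1) (hirr : Irrational x) (k : ℕ) :
    1 ≤ rcfA x (k + 1) := by
  obtain ⟨⟨h0, h1⟩, _⟩ := tail_mem x hx hirr k
  have : (1:ℝ) < 1 / gaussMap^[k] x := one_lt_one_div h0 h1
  rw [rcfA]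
  simp only [Nat.add_sub_cancel]
  exact_mod_cast Int.le_floor.mpr (le_of_lt (by exact_mod_cast this))

lemma q_one_le (x : ℝ) (hx : x ∈ Set.Ioo (0:ℝ) 1) (hirr : Irrational x) (k : ℕ) :
    1 ≤ rcfQ x k ∧ 1 ≤ rcfQ x (k + 1) := by
  induction k with
  | zero => exact ⟨le_refl _, a_one_le x hx hirr 0⟩
  | succ k ih =>
    obtain ⟨h1, h2⟩ := ih
    refine ⟨h2, ?_⟩
    show 1 ≤ rcfA x (k + 2) * rcfQ x (k + 1) + rcfQ x k
    have ha := a_one_le x hx hirr (k + 1)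
    nlinarith

lemma key_D (x : ℝ) (hx : x ∈ Set.Ioo (0:ℝ) 1) (hirr : Irrational x) (k : ℕ) :
    gaussMap^[k] x * ((rcfA x (k + 1) : ℝ) + gaussMap^[k + 1] x) = 1 := by
  obtain ⟨⟨h0, h1⟩, _⟩ := tail_mem x hx hirr k
  have hne : gaussMap^[k] x ≠ 0 := ne_of_gt h0
  rw [Function.iterate_succ_apply', gaussMap, if_neg hne, rcfA]
  simp only [Nat.add_sub_cancel]
  field_simp
  ring

lemma key_E (x : ℝ) (hx : x ∈ Set.Ioo (0:ℝ) 1) (hirr : Irrational x) (n : ℕ) :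
    x * ((rcfQ x (n + 1) : ℝ) + (rcfQ x n : ℝ) * gaussMap^[n + 1] x) =
      (rcfP x (n + 1) : ℝ) + (rcfP x n : ℝ) * gaussMap^[n + 1] x := by
  induction n with
  | zero =>
    have hD := key_D x hx hirr 0
    simp only [Function.iterate_zero_apply] at hD
    simp only [rcfP, rcfQ, Int.cast_one, Int.cast_zero]
    push_cast
    linear_combination hD
  | succ n ih =>
    have hD := key_D x hx hirr (n + 1)
    show x * ((↑(rcfA x (n + 2) * rcfQ x (n + 1) + rcfQ x n) : ℝ) + _ * _) = _
    have hP : (rcfP x (n + 2) : ℝ) = (rcfA x (n + 2) : ℝ) * rcfP x (n + 1) + rcfP x n := by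
      rw [show rcfP x (n + 2) = rcfA x (n + 2) * rcfP x (n + 1) + rcfP x n from rfl]
      push_cast; ring
    have hQ : (rcfQ x (n + 2) : ℝ) = (rcfA x (n + 2) : ℝ) * rcfQ x (n + 1) + rcfQ x n := by
      rw [show rcfQ x (n + 2) = rcfA x (n + 2) * rcfQ x (n + 1) + rcfQ x n from rfl]
      push_cast; ring
    push_cast
    rw [show rcfP x (n + 1 + 1) = rcfP x (n + 2) from rfl] at *
    linear_combination ((rcfA x (n+2) : ℝ) + gaussMap^[n+2] x) * ih +
      ((rcfP x n : ℝ) - x * rcfQ x n) * hD - hP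

lemma key_F (x : ℝ) (n : ℕ) :
    rcfP x (n + 1) * rcfQ x n - rcfP x n * rcfQ x (n + 1) = (-1) ^ n := by
  induction n with
  | zero => simp [rcfP, rcfQ]
  | succ n ih =>
    show (rcfA x (n + 2) * rcfP x (n + 1) + rcfP x n) * rcfQ x (n + 1) -
        rcfP x (n + 1) * (rcfA x (n + 2) * rcfQ x (n + 1) + rcfQ x n) = _
    rw [pow_succ]
    linear_combination (-1 : ℤ) * ih

lemma theta_formula (x : ℝ) (hx : x ∈ Set.Ioo (0:ℝ) 1) (hirr : Irrational x) (k : ℕ) :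
    Theta x (k + 1) = (rcfQ x (k+1) : ℝ) * gaussMap^[k+1] x /
        ((rcfQ x (k+1) : ℝ) + (rcfQ x k : ℝ) * gaussMap^[k+1] x) ∧
      Theta x k = (rcfQ x k : ℝ) /
        ((rcfQ x (k+1) : ℝ) + (rcfQ x k : ℝ) * gaussMap^[k+1] x) := by
  obtain ⟨⟨ht0, ht1⟩, hti⟩ := tail_mem x hx hirr (k + 1)
  have hE := key_E x hx hirr k
  have hFr : (rcfP x (k+1) : ℝ) * (rcfQ x k : ℝ) - (rcfP x k : ℝ) * (rcfQ x (k+1) : ℝ)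
      = (-1) ^ k := by exact_mod_cast key_F x k
  obtain ⟨hRi, hQi⟩ := q_one_le x hx hirr k
  have hR : (1:ℝ) ≤ (rcfQ x k : ℝ) := by exact_mod_cast hRi
  have hQ : (1:ℝ) ≤ (rcfQ x (k+1) : ℝ) := by exact_mod_cast hQi
  simp only [Theta]
  set t := gaussMap^[k + 1] x with htdef
  set R : ℝ := (rcfQ x k : ℝ) with hRdef
  set Q : ℝ := (rcfQ x (k+1) : ℝ) with hQdef
  set P' : ℝ := (rcfP x k : ℝ) with hP'def
  set P : ℝ := (rcfP x (k+1) : ℝ) with hPdef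
  set e : ℝ := (-1:ℝ)^k with hedef
  have hR0 : (0:ℝ) < R := by linarith
  have hQ0 : (0:ℝ) < Q := by linarith
  have hD0 : (0:ℝ) < Q + R * t := by positivity
  have he : |e| = 1 := by rw [hedef, abs_pow, abs_neg, abs_one, one_pow]
  have h3 : x * Q - P = t * (P' - x * R) := by linear_combination hE
  have h2 : (x * R - P') * (Q + R * t) = e := by linear_combination R * hE + hFr
  have habs2 : |x * R - P'| = 1 / (Q + R * t) := by
    rw [eq_div_iff (ne_of_gt hD0), ← abs_of_pos hD0, ← abs_mul, h2, he]
  constructor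
  · have hx1 : x - P / Q = (x * Q - P) / Q := by field_simp
    rw [hx1, h3, abs_div, abs_of_pos hQ0, abs_mul, abs_of_pos ht0, abs_sub_comm, habs2]
    field_simp
  · have hx2 : x - P' / R = (x * R - P') / R := by field_simp
    rw [hx2, abs_div, abs_of_pos hR0, habs2]
    field_simp

theorem easy_case_eq_min (x : ℝ) (hx : x ∈ Set.Ioo (0 : ℝ) 1) (hirr : Irrational x)
    (n : ℕ) (hn : 1 ≤ n) (m : ℕ) (hm : 2 ≤ m)
    (han : rcfA x n = m) (han1 : rcfA x (n + 1) = m) :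
    min (Theta x (n - 1)) (Theta x n) ≤ (m : ℝ) / (m ^ 2 + 1) ∧
      (m : ℝ) / (m ^ 2 + 1) ≤ 2 / 5 := by
  obtain ⟨k, rfl⟩ : ∃ k, n = k + 1 := ⟨n - 1, (Nat.succ_pred_eq_of_pos hn).symm⟩
  have hmR : (2:ℝ) ≤ m := by exact_mod_cast hm
  constructor
  swap
  · rw [div_le_div_iff₀ (by positivity) (by norm_num)]
    nlinarith [hmR]
  obtain ⟨⟨ht0, ht1⟩, hti⟩ := tail_mem x hx hirr (k + 1)
  obtain ⟨hRi, hQi⟩ := q_one_le x hx hirr k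
  have hR : (1:ℝ) ≤ (rcfQ x k : ℝ) := by exact_mod_cast hRi
  have hQ : (1:ℝ) ≤ (rcfQ x (k+1) : ℝ) := by exact_mod_cast hQi
  obtain ⟨hTh1, hTh0⟩ := theta_formula x hx hirr k
  -- m * t ≤ 1
  have hmt : (m:ℝ) * gaussMap^[k+1] x ≤ 1 := by
    have hfl : ((m:ℤ):ℝ) ≤ 1 / gaussMap^[k+1] x := by
      rw [← han1]
      rw [show rcfA x (k + 1 + 1) = ⌊1 / gaussMap^[k+1] x⌋ by simp [rcfA]]
      exact Int.floor_le _
    have hfl' : (m:ℝ) ≤ 1 / gaussMap^[k+1] x := by exact_mod_cast hfl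
    calc (m:ℝ) * gaussMap^[k+1] x ≤ (1 / gaussMap^[k+1] x) * gaussMap^[k+1] x :=
          mul_le_mul_of_nonneg_right hfl' ht0.le
    _ = 1 := one_div_mul_cancel (ne_of_gt ht0)
  -- m * R ≤ Q
  have hQR : (m:ℝ) * (rcfQ x k : ℝ) ≤ (rcfQ x (k+1) : ℝ) := by
    rcases Nat.eq_zero_or_pos k with rfl | hk
    · have hQ1 : rcfQ x 1 = rcfA x 1 := rfl
      have hR1 : rcfQ x 0 = 1 := rfl
      rw [hQ1, hR1, han]
      push_cast
      linarith
    · obtain ⟨j, rfl⟩ : ∃ j, k = j + 1 := ⟨k - 1, (Nat.succ_pred_eq_of_pos hk).symm⟩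
      have hq2 : rcfQ x (j + 2) = rcfA x (j + 2) * rcfQ x (j + 1) + rcfQ x j := rfl
      have hqj : 1 ≤ rcfQ x j := (q_one_le x hx hirr j).1
      have hint : (m:ℤ) * rcfQ x (j + 1) ≤ rcfQ x (j + 2) := by
        rw [hq2, han]
        nlinarith
      exact_mod_cast hint
  simp only [Nat.add_sub_cancel]
  rw [hTh0, hTh1]
  set t := gaussMap^[k + 1] x with htdef
  set R : ℝ := (rcfQ x k : ℝ) with hRdef
  set Q : ℝ := (rcfQ x (k+1) : ℝ) with hQdef
  have hR0 : (0:ℝ) < R := by linarith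
  have hQ0 : (0:ℝ) < Q := by linarith
  have hD0 : (0:ℝ) < Q + R * t := by positivity
  have hm2 : (0:ℝ) < (m:ℝ)^2 + 1 := by positivity
  rcases le_total (Q * t) R with h | h
  · refine le_trans (min_le_right _ _) ?_
    rw [div_le_div_iff₀ hD0 hm2]
    nlinarith [mul_nonneg (mul_nonneg hQ0.le (by linarith : (0:ℝ) ≤ 1 - (m:ℝ) * t))
        (by linarith : (0:ℝ) ≤ (m:ℝ) - t),
      mul_nonneg (mul_nonneg (sub_nonneg.mpr h) (by linarith : (0:ℝ) ≤ (m:ℝ))) ht0.le]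
  · refine le_trans (min_le_left _ _) ?_
    rw [div_le_div_iff₀ hD0 hm2]
    nlinarith [mul_nonneg (by linarith : (0:ℝ) ≤ Q - (m:ℝ) * R)
        (by nlinarith : (0:ℝ) ≤ (m:ℝ) * Q - R),
      mul_nonneg (mul_nonneg (sub_nonneg.mpr h) (by linarith : (0:ℝ) ≤ (m:ℝ))) hR0.le, hQ0]
end

section
/- Let d ∈ ℕ, d ≥ 1, and let x = [0; d, 1, 1, d] be the rational with this continued fraction expansion. Then x = (2d+1)/(2d²+2d+1), and with q_1 = d, q_2 = d+1, one has Θ_1(x) = Θ_2(x) = d(d+1)/(2d²+2d+1). -/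
theorem counterexample_value (d : ℕ) (hd : 1 ≤ d) (x : ℝ)
    (hx : x = 1 / ((d : ℝ) + 1 / (1 + 1 / (1 + 1 / (d : ℝ))))) :
    x = (2 * (d : ℝ) + 1) / (2 * (d : ℝ) ^ 2 + 2 * d + 1) ∧
      (d : ℝ) ^ 2 * |x - 1 / (d : ℝ)| =
        (d : ℝ) * (d + 1) / (2 * (d : ℝ) ^ 2 + 2 * d + 1) ∧
      ((d : ℝ) + 1) ^ 2 * |x - 1 / ((d : ℝ) + 1)| =
        (d : ℝ) * (d + 1) / (2 * (d : ℝ) ^ 2 + 2 * d + 1) := by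
  have hD : (1 : ℝ) ≤ (d : ℝ) := by exact_mod_cast hd
  have hd0 : (0 : ℝ) < (d : ℝ) := lt_of_lt_of_le one_pos hD
  have hQ : (0 : ℝ) < 2 * (d : ℝ) ^ 2 + 2 * d + 1 := by positivity
  have h1 : (0 : ℝ) < 1 + 1 / (d : ℝ) := by positivity
  have h2 : (0 : ℝ) < 1 + 1 / (1 + 1 / (d : ℝ)) := by positivity
  have h3 : (0 : ℝ) < (d : ℝ) + 1 / (1 + 1 / (1 + 1 / (d : ℝ))) := by positivity
  have hxval : x = (2 * (d : ℝ) + 1) / (2 * (d : ℝ) ^ 2 + 2 * d + 1) := by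
    rw [hx]
    field_simp
    ring
  refine ⟨hxval, ?_, ?_⟩
  · have h : x - 1 / (d : ℝ) = -((d + 1) / ((d : ℝ) * (2 * (d : ℝ) ^ 2 + 2 * d + 1))) := by
      rw [hxval]; field_simp; ring
    rw [h, abs_neg, abs_of_pos (by positivity)]
    field_simp
  · have h : x - 1 / ((d : ℝ) + 1) = (d : ℝ) / (((d : ℝ) + 1) * (2 * (d : ℝ) ^ 2 + 2 * d + 1)) := by
      rw [hxval]; field_simp; ring
    rw [h, abs_of_pos (by positivity)]
    field_simp
end
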